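/- arXiv:2207.13566 — 2 statements merged into one kernel-verified Lean document; each statement's English description precedes it below -/
import Mathlib

section
/- For all real θ and t ≥ 0, the function X(t) = A(e^{θ²t} − (4|θ|√t/√π) ∑_{n=0}^∞ 4^n (n+1)! (θ²t)^n / (2n+2)!) satisfies X(t) = A ∑_{n=0}^∞ (-1)^n (θ√t)^n / Γ(n/2 + 1) whenever θ ≥ 0. -/
/-!
Split the Mittag-Leffler series at even and odd indices. At `n = 2k` the Gamma factor is `k!`,
so the even part is the exponential series of `x²` with `x = θ√t`. At `n = 2k + 1` Legendre's
duplication formula gives `Γ(k + 3/2) = √π (2k+1)! / (2^(2k+1) k!)`, which turns the odd part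
into the correction series; it converges because `4^k (k+1)! k! ≤ (2k+2)!`, a consequence of
`4^(k+1) ≤ 2(k+1) · centralBinom (k+1)`.
-/

open scoped Nat
open Real

theorem Real.Gamma_nat_add_three_halves (k : ℕ) :
    Gamma (k + 3 / 2) = √π * (2 * k + 1)! / (2 ^ (2 * k + 1) * k !) := by
  have h := Gamma_mul_Gamma_add_half (k + 1)
  rw [show (2 : ℝ) * (k + 1) = ((2 * k + 1 : ℕ) : ℝ) + 1 by push_cast; ring,
    Gamma_nat_eq_factorial, Gamma_nat_eq_factorial,
    show (1 : ℝ) - (((2 * k + 1 : ℕ) : ℝ) + 1) = -((2 * k + 1 : ℕ) : ℝ) by push_cast; ring,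
    rpow_neg zero_le_two, rpow_natCast, add_assoc, show (1 : ℝ) + 1 / 2 = 3 / 2 by norm_num] at h
  rw [eq_div_iff (by positivity)]
  calc Gamma (k + 3 / 2) * (2 ^ (2 * k + 1) * k !)
      = k ! * Gamma (k + 3 / 2) * 2 ^ (2 * k + 1) := by ring
    _ = √π * (2 * k + 1)! := by rw [h]; field_simp

theorem Nat.four_pow_mul_factorial_mul_factorial_le (k : ℕ) :
    4 ^ k * (k + 1)! * k ! ≤ (2 * k + 2)! := by
  have hbinom : 4 ^ k ≤ (k + 1) * (k + 1).centralBinom := by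
    have := Nat.four_pow_le_two_mul_self_mul_centralBinom (k + 1) k.succ_pos
    rw [pow_succ, mul_assoc] at this
    omega
  have hfact := Nat.choose_mul_factorial_mul_factorial (show k + 1 ≤ 2 * (k + 1) by omega)
  rw [show 2 * (k + 1) - (k + 1) = k + 1 by omega, ← Nat.centralBinom_eq_two_mul_choose] at hfact
  calc 4 ^ k * (k + 1)! * k ! ≤ (k + 1) * (k + 1).centralBinom * (k + 1)! * k ! := by gcongr
    _ = (2 * k + 2)! := by rw [← mul_add_one 2 k, ← hfact, Nat.factorial_succ k]; ring

theorem summable_four_pow_mul_factorial_mul_pow_div_factorial (y : ℝ) :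
    Summable fun k : ℕ ↦ 4 ^ k * ((k + 1)! : ℝ) * y ^ k / (2 * k + 2)! := by
  refine .of_norm_bounded (Real.summable_pow_div_factorial |y|) fun k ↦ ?_
  have hle : (4 ^ k * (k + 1)! * k ! : ℝ) ≤ (2 * k + 2)! := by
    exact_mod_cast Nat.four_pow_mul_factorial_mul_factorial_le k
  simp only [norm_div, norm_mul, norm_pow, Real.norm_eq_abs, Nat.abs_cast, Nat.abs_ofNat]
  rw [div_le_div_iff₀ (by positivity) (by positivity)]
  calc 4 ^ k * ((k + 1)! : ℝ) * |y| ^ k * k ! = (4 ^ k * (k + 1)! * k !) * |y| ^ k := by ring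
    _ ≤ (2 * k + 2)! * |y| ^ k := by gcongr
    _ = |y| ^ k * (2 * k + 2)! := mul_comm _ _

section MittagLeffler

variable (x : ℝ) (k : ℕ)

theorem neg_one_pow_mul_pow_div_Gamma_half_add_one_even :
    (-1) ^ (2 * k) * x ^ (2 * k) / Gamma ((2 * k : ℕ) / 2 + 1) = (x ^ 2) ^ k / k ! := by
  rw [show ((2 * k : ℕ) : ℝ) / 2 = k by push_cast; ring, Gamma_nat_eq_factorial, pow_mul, pow_mul]
  norm_num

theorem neg_one_pow_mul_pow_div_Gamma_half_add_one_odd :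
    (-1) ^ (2 * k + 1) * x ^ (2 * k + 1) / Gamma ((2 * k + 1 : ℕ) / 2 + 1) =
      -(4 * x / √π) * (4 ^ k * (k + 1)! * (x ^ 2) ^ k / (2 * k + 2)!) := by
  have hsqrt : (0 : ℝ) < √π := sqrt_pos.mpr pi_pos
  have hsign : (-1 : ℝ) ^ (2 * k + 1) = -1 := by rw [pow_succ, pow_mul]; norm_num
  have hpow : x ^ (2 * k + 1) = x * (x ^ 2) ^ k := by ring
  have htwo : (2 : ℝ) ^ (2 * k + 1) = 2 * 4 ^ k := by rw [pow_succ, pow_mul]; norm_num; ring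
  rw [show ((2 * k + 1 : ℕ) : ℝ) / 2 + 1 = k + 3 / 2 by push_cast; ring,
    Gamma_nat_add_three_halves, hsign, hpow, htwo, Nat.factorial_succ (2 * k + 1),
    Nat.factorial_succ k]
  push_cast
  field_simp
  ring

theorem tsum_neg_one_pow_mul_pow_div_Gamma_half_add_one :
    ∑' n : ℕ, (-1) ^ n * x ^ n / Gamma ((n : ℝ) / 2 + 1) =
      exp (x ^ 2) - 4 * x / √π * ∑' k : ℕ, 4 ^ k * ((k + 1)! : ℝ) * (x ^ 2) ^ k / (2 * k + 2)! := by
  have hodd := summable_four_pow_mul_factorial_mul_pow_div_factorial (x ^ 2)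
  rw [← tsum_even_add_odd (by simpa only [neg_one_pow_mul_pow_div_Gamma_half_add_one_even]
      using Real.summable_pow_div_factorial (x ^ 2))
    (by simpa only [neg_one_pow_mul_pow_div_Gamma_half_add_one_odd] using hodd.mul_left _)]
  simp only [neg_one_pow_mul_pow_div_Gamma_half_add_one_even,
    neg_one_pow_mul_pow_div_Gamma_half_add_one_odd, tsum_mul_left, exp_eq_exp_ℝ,
    NormedSpace.exp_eq_tsum_div]
  ring

end MittagLeffler

theorem solution_eq_mittag_leffler (A θ t : ℝ) (hθ : 0 ≤ θ) (ht : 0 ≤ t) :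
    A * (Real.exp (θ ^ 2 * t) -
        (4 * |θ| * Real.sqrt t / Real.sqrt Real.pi) *
          ∑' n : ℕ, 4 ^ n * (Nat.factorial (n + 1) : ℝ) * (θ ^ 2 * t) ^ n /
            (Nat.factorial (2 * n + 2) : ℝ)) =
      A * ∑' n : ℕ, (-1) ^ n * (θ * Real.sqrt t) ^ n / Real.Gamma ((n : ℝ) / 2 + 1) := by
  have hsq : θ ^ 2 * t = (θ * √t) ^ 2 := by rw [mul_pow, sq_sqrt ht]
  rw [tsum_neg_one_pow_mul_pow_div_Gamma_half_add_one, abs_of_nonneg hθ, hsq, mul_assoc 4 θ]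
end

section
/- For all t > 0 and θ ≠ 0, the function f(t) = e^{θ²t} − (4|θ|√t/√π)∑_{n=0}^∞ 4^n(n+1)!(θ²t)^n/(2n+2)! satisfies 0 < f(t) < 1 for sufficiently small t > 0, and f(0) = 1. -/
/-!
Write `s = |θ|√t`, so that `θ²t = s²` and the prefactor is `4s/√π`. Every coefficient
`4ⁿ(n+1)!/(2n+2)!` lies in `(0, 1/2]` with equality at `n = 0`, so for `s²` small the series lies
between `1/2` and `1`. Hence `f = exp(s²) - (4s/√π)·S` with `1/2 ≤ S ≤ 1`: the prefactor is below
`1 < exp(s²)`, which gives `f > 0`, while `exp(s²) - 1 = O(s²)` is beaten by `(4s/√π)·S ≥ 2s/√π`,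
which gives `f < 1`.
-/

open Nat Real

theorem two_mul_four_pow_mul_factorial_le : ∀ n : ℕ, 2 * 4 ^ n * (n + 1)! ≤ (2 * n + 2)!
  | 0 => le_rfl
  | n + 1 => by
    have ih := two_mul_four_pow_mul_factorial_le n
    rw [show 2 * (n + 1) + 2 = 2 * n + 2 + 1 + 1 by ring, factorial_succ (2 * n + 2 + 1),
      factorial_succ (2 * n + 2), factorial_succ (n + 1), pow_succ]
    calc 2 * (4 ^ n * 4) * ((n + 1 + 1) * (n + 1)!) = 4 * (n + 2) * (2 * 4 ^ n * (n + 1)!) := by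
          ring
      _ ≤ 4 * (n + 2) * (2 * n + 2)! := by gcongr
      _ ≤ (2 * n + 2 + 1 + 1) * ((2 * n + 2 + 1) * (2 * n + 2)!) := by
          rw [← mul_assoc]; exact Nat.mul_le_mul_right _ (by nlinarith)

noncomputable def elimSeries (x : ℝ) : ℝ :=
  ∑' n : ℕ, 4 ^ n * ((n + 1)! : ℝ) * x ^ n / ((2 * n + 2)! : ℝ)

section elimSeries

variable {x : ℝ}

theorem elimSeries_term_nonneg (hx : 0 ≤ x) (n : ℕ) :
    0 ≤ 4 ^ n * ((n + 1)! : ℝ) * x ^ n / ((2 * n + 2)! : ℝ) := by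
  positivity

theorem elimSeries_term_le (hx : 0 ≤ x) (n : ℕ) :
    4 ^ n * ((n + 1)! : ℝ) * x ^ n / ((2 * n + 2)! : ℝ) ≤ x ^ n / 2 := by
  have hcoeff : 2 * 4 ^ n * ((n + 1)! : ℝ) ≤ (2 * n + 2)! := by
    exact_mod_cast two_mul_four_pow_mul_factorial_le n
  rw [div_le_div_iff₀ (by positivity) two_pos]
  calc 4 ^ n * ((n + 1)! : ℝ) * x ^ n * 2 = 2 * 4 ^ n * (n + 1)! * x ^ n := by ring
    _ ≤ x ^ n * (2 * n + 2)! := by rw [mul_comm (x ^ n)]; gcongr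

theorem summable_elimSeries_term (hx0 : 0 ≤ x) (hx1 : x < 1) :
    Summable fun n : ℕ => 4 ^ n * ((n + 1)! : ℝ) * x ^ n / ((2 * n + 2)! : ℝ) :=
  .of_nonneg_of_le (elimSeries_term_nonneg hx0) (elimSeries_term_le hx0)
    ((summable_geometric_of_lt_one hx0 hx1).div_const 2)

theorem half_le_elimSeries (hx0 : 0 ≤ x) (hx1 : x < 1) : 1 / 2 ≤ elimSeries x := by
  have h := (summable_elimSeries_term hx0 hx1).le_tsum 0
    fun n _ => elimSeries_term_nonneg hx0 n
  simpa [elimSeries] using h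

theorem elimSeries_le (hx0 : 0 ≤ x) (hx1 : x < 1) : elimSeries x ≤ (1 - x)⁻¹ / 2 := by
  rw [← tsum_geometric_of_lt_one hx0 hx1, ← tsum_div_const]
  exact (summable_elimSeries_term hx0 hx1).tsum_le_tsum (elimSeries_term_le hx0)
    ((summable_geometric_of_lt_one hx0 hx1).div_const 2)

end elimSeries

theorem elim_factor_pos_and_lt_one {s : ℝ} (hs0 : 0 < s) (hs : s < 1 / 4) :
    0 < exp (s ^ 2) - 4 * s / √π * elimSeries (s ^ 2) ∧
      exp (s ^ 2) - 4 * s / √π * elimSeries (s ^ 2) < 1 := by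
  have hx0 : 0 ≤ s ^ 2 := sq_nonneg s
  have hx : s ^ 2 < 1 / 16 := by nlinarith
  have hS_ge : 1 / 2 ≤ elimSeries (s ^ 2) := half_le_elimSeries hx0 (by linarith)
  have hS_le : elimSeries (s ^ 2) ≤ 1 := by
    refine (elimSeries_le hx0 (by linarith)).trans ?_
    rw [div_le_one two_pos, inv_le_comm₀ (by linarith) two_pos]
    linarith
  have hπ_ge : 1 ≤ √π := one_le_sqrt.mpr (by linarith [pi_gt_three])
  have hπ_lt : √π < 2 := (sqrt_lt' two_pos).mpr (by linarith [pi_lt_four])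
  have hc_pos : 0 < 4 * s / √π := by positivity
  have hc_lt : 4 * s / √π < 1 := (div_lt_one (by positivity)).mpr (by linarith)
  constructor
  · have hcS : 4 * s / √π * elimSeries (s ^ 2) < 1 := by nlinarith
    linarith [one_lt_exp_iff.mpr (by positivity : 0 < s ^ 2)]
  · have hexp : exp (s ^ 2) - 1 ≤ 2 * s ^ 2 := by
      have h := abs_exp_sub_one_le (x := s ^ 2) (by rw [abs_of_nonneg hx0]; linarith)
      rw [abs_of_nonneg hx0] at h
      exact (abs_le.mp h).2
    -- `2s² < 2s/√π` because `s√π < 2s < 1`.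
    have hquad : 2 * s ^ 2 < 4 * s / √π * (1 / 2) := by
      rw [div_mul_eq_mul_div, lt_div_iff₀ (by positivity)]
      nlinarith
    linarith [mul_le_mul_of_nonneg_left hS_ge hc_pos.le]

theorem fractional_elimination_factor_small_time (θ : ℝ) (hθ : θ ≠ 0) :
    (fun t : ℝ => Real.exp (θ ^ 2 * t) -
        (4 * |θ| * Real.sqrt t / Real.sqrt Real.pi) *
          ∑' n : ℕ, 4 ^ n * (Nat.factorial (n + 1) : ℝ) * (θ ^ 2 * t) ^ n /
            (Nat.factorial (2 * n + 2) : ℝ)) 0 = 1 ∧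
    ∃ δ : ℝ, 0 < δ ∧ ∀ t : ℝ, 0 < t → t < δ →
      0 < (fun t : ℝ => Real.exp (θ ^ 2 * t) -
        (4 * |θ| * Real.sqrt t / Real.sqrt Real.pi) *
          ∑' n : ℕ, 4 ^ n * (Nat.factorial (n + 1) : ℝ) * (θ ^ 2 * t) ^ n /
            (Nat.factorial (2 * n + 2) : ℝ)) t ∧
      (fun t : ℝ => Real.exp (θ ^ 2 * t) -
        (4 * |θ| * Real.sqrt t / Real.sqrt Real.pi) *
          ∑' n : ℕ, 4 ^ n * (Nat.factorial (n + 1) : ℝ) * (θ ^ 2 * t) ^ n /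
            (Nat.factorial (2 * n + 2) : ℝ)) t < 1 := by
  refine ⟨by simp, 1 / (16 * θ ^ 2), by positivity, fun t ht0 htδ => ?_⟩
  have hsq : θ ^ 2 * t = (|θ| * √t) ^ 2 := by rw [mul_pow, sq_abs, sq_sqrt ht0.le]
  have hs0 : 0 < |θ| * √t := by positivity
  have hs : |θ| * √t < 1 / 4 := by
    rw [lt_div_iff₀ (by positivity)] at htδ
    nlinarith
  beta_reduce
  rw [hsq, mul_assoc 4 |θ|]
  exact elim_factor_pos_and_lt_one hs0 hs
end
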